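/- (Necessary condition for existence on the refuge zone: empty-interior case.) Suppose $u \in C(\bar\Omega)$ is a positive bounded solution of $\int_\Omega K(x,y)u(y)\,dy - k(x)u(x) + a(x)u(x) - \beta(x)u(x)^p = 0$ on $\Omega$, where $\beta \ge 0$ vanishes exactly on the refuge $\omega = \{x \in \bar\Omega : \beta(x) = 0\}$, and $\omega$ has empty interior and is nonempty. If $\sup_{x\in\omega}(a(x) - k(x)) \ge 0$, then no such positive solution exists. Equivalently, existence of a positive solution forces $a(x) < k(x)$ on $\omega$ (i.e. $\sup_\omega(a - k) < 0$). -/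

import Mathlib

open MeasureTheory Set

/-!
On the refuge `ω` the nonlinear term vanishes, so the equation reads
`(k x - a x) u x = ∫ K x y u y dy`. The right-hand side is positive, because `K` is bounded
below near the diagonal and `u > 0`, and it is continuous on the compact set `closure Ω`.
So the integral divided by `u` is a positive continuous function on `closure Ω` with a positive
minimum `δ`, and on `ω` it equals `k - a`.
-/

section KernelIntegral

variable {X Y : Type*} [TopologicalSpace X] [TopologicalSpace Y] {K : X → Y → ℝ} {u : Y → ℝ}
  {s : Set X} {Ω : Set Y}

lemma exists_bound_kernel_mul (hK : Continuous fun q : X × Y => K q.1 q.2) (hs : IsCompact s)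
    (hΩ : IsCompact (closure Ω)) (hu : ContinuousOn u (closure Ω)) :
    ∃ C, ∀ x ∈ s, ∀ y ∈ Ω, ‖K x y * u y‖ ≤ C := by
  have hcont : ContinuousOn (fun q : X × Y => K q.1 q.2 * u q.2) (s ×ˢ closure Ω) :=
    hK.continuousOn.mul (hu.comp continuousOn_snd fun _ hq => hq.2)
  obtain ⟨C, hC⟩ := (hs.prod hΩ).exists_bound_of_continuousOn hcont
  exact ⟨C, fun x hx y hy => hC (x, y) ⟨hx, subset_closure hy⟩⟩

variable [MeasurableSpace Y] [OpensMeasurableSpace Y] {μ : Measure Y}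

lemma aestronglyMeasurable_kernel_mul (hK : Continuous fun q : X × Y => K q.1 q.2)
    (hΩm : MeasurableSet Ω) (hu : ContinuousOn u (closure Ω)) (x : X) :
    AEStronglyMeasurable (fun y => K x y * u y) (μ.restrict Ω) :=
  ((hK.comp (Continuous.prodMk_right x)).continuousOn.mul (hu.mono subset_closure))
    |>.aestronglyMeasurable hΩm

lemma integrableOn_kernel_mul (hK : Continuous fun q : X × Y => K q.1 q.2)
    (hΩ : IsCompact (closure Ω)) (hΩm : MeasurableSet Ω) (hμ : μ Ω ≠ ⊤)
    (hu : ContinuousOn u (closure Ω)) (x : X) :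
    IntegrableOn (fun y => K x y * u y) Ω μ := by
  obtain ⟨C, hC⟩ := exists_bound_kernel_mul hK isCompact_singleton hΩ hu
  exact (integrableOn_const hμ).mono' (aestronglyMeasurable_kernel_mul hK hΩm hu x)
    (ae_restrict_of_forall_mem hΩm (hC x rfl))

lemma continuousOn_setIntegral_kernel_mul [FirstCountableTopology X]
    (hK : Continuous fun q : X × Y => K q.1 q.2)
    (hs : IsCompact s) (hΩ : IsCompact (closure Ω)) (hΩm : MeasurableSet Ω) (hμ : μ Ω ≠ ⊤)
    (hu : ContinuousOn u (closure Ω)) :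
    ContinuousOn (fun x => ∫ y in Ω, K x y * u y ∂μ) s := by
  obtain ⟨C, hC⟩ := exists_bound_kernel_mul hK hs hΩ hu
  exact continuousOn_of_dominated (fun x _ => aestronglyMeasurable_kernel_mul hK hΩm hu x)
    (fun x hx => ae_restrict_of_forall_mem hΩm (hC x hx)) (integrableOn_const hμ)
    (ae_of_all _ fun y =>
      ((hK.comp (continuous_id.prodMk continuous_const)).mul continuous_const).continuousOn)

end KernelIntegral

lemma setIntegral_pos_of_pos_on_open {Y : Type*} [TopologicalSpace Y] [MeasurableSpace Y]
    {μ : Measure Y} [μ.IsOpenPosMeasure] {f : Y → ℝ} {Ω U : Set Y} (hΩm : MeasurableSet Ω)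
    (hf : IntegrableOn f Ω μ) (hf_nonneg : ∀ y ∈ Ω, 0 ≤ f y) (hU : IsOpen U)
    (hU_ne : U.Nonempty) (hUΩ : U ⊆ Ω) (hf_pos : ∀ y ∈ U, 0 < f y) :
    0 < ∫ y in Ω, f y ∂μ := by
  rw [setIntegral_pos_iff_support_of_nonneg_ae (ae_restrict_of_forall_mem hΩm hf_nonneg) hf]
  exact (hU.measure_pos μ hU_ne).trans_le
    (measure_mono fun y hy => ⟨(hf_pos y hy).ne', hUΩ hy⟩)

theorem stmt_7_general {n : ℕ} (Ω : Set (Fin n → ℝ))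
    (hΩo : IsOpen Ω) (hΩb : Bornology.IsBounded Ω)
    (K : (Fin n → ℝ) → (Fin n → ℝ) → ℝ)
    (hKc : Continuous fun q : (Fin n → ℝ) × (Fin n → ℝ) => K q.1 q.2)
    (hKnn : ∀ x y, 0 ≤ K x y)
    (c₀ ε₀ : ℝ) (hc₀ : 0 < c₀) (hε₀ : 0 < ε₀)
    (hKpos : ∀ x ∈ closure Ω, ∀ y ∈ Metric.ball x ε₀, c₀ ≤ K x y)
    (k : (Fin n → ℝ) → ℝ)
    (a β : (Fin n → ℝ) → ℝ)
    (p : ℝ)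
    (u : (Fin n → ℝ) → ℝ) (huc : ContinuousOn u (closure Ω))
    (hupos : ∀ x ∈ closure Ω, 0 < u x)
    (heq : ∀ x ∈ closure Ω,
      (∫ y in Ω, K x y * u y) - k x * u x + a x * u x - β x * u x ^ p = 0) :
    ∃ δ > 0, ∀ x ∈ {x ∈ closure Ω | β x = 0}, a x - k x ≤ -δ := by
  have hΩc : IsCompact (closure Ω) := hΩb.isCompact_closure
  have hΩm : MeasurableSet Ω := hΩo.measurableSet
  set F := fun x => ∫ y in Ω, K x y * u y
  have hF_cont : ContinuousOn F (closure Ω) :=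
    continuousOn_setIntegral_kernel_mul hKc hΩc hΩc hΩm hΩb.measure_lt_top.ne huc
  have hF_pos : ∀ x ∈ closure Ω, 0 < F x := by
    intro x hx
    obtain ⟨y, hyΩ, hxy⟩ := Metric.mem_closure_iff.1 hx ε₀ hε₀
    refine setIntegral_pos_of_pos_on_open hΩm
      (integrableOn_kernel_mul hKc hΩc hΩm hΩb.measure_lt_top.ne huc x)
      (fun y hy => mul_nonneg (hKnn x y) (hupos y (subset_closure hy)).le)
      (hΩo.inter Metric.isOpen_ball) ⟨y, hyΩ, Metric.mem_ball'.2 hxy⟩ inter_subset_left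
      fun y hy => mul_pos (hc₀.trans_le (hKpos x hx y hy.2)) (hupos y (subset_closure hy.1))
  obtain ⟨δ, hδ, hδF⟩ := hΩc.exists_forall_le' (hF_cont.div huc fun x hx => (hupos x hx).ne')
    fun x hx => div_pos (hF_pos x hx) (hupos x hx)
  refine ⟨δ, hδ, fun x ⟨hx, hβx⟩ => ?_⟩
  have hFx : F x = (k x - a x) * u x := by
    have := heq x hx
    rw [hβx] at this
    linarith
  have := hδF x hx
  rw [Pi.div_apply, hFx, mul_div_cancel_right₀ _ (hupos x hx).ne'] at this
  linarith

/-- necessary condition on the refuge zone (empty-interior case):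
if `u` is a positive bounded continuous solution of the nonlocal logistic equation and
the refuge `ω = {x ∈ closure Ω | β x = 0}` is nonempty with empty interior, then
`sup_ω (a - k) < 0`, i.e. `a < k` on `ω` uniformly. -/
theorem stmt_7 {n : ℕ} (Ω : Set (Fin n → ℝ))
    (hΩo : IsOpen Ω) (hΩb : Bornology.IsBounded Ω) (hΩne : Ω.Nonempty)
    (K : (Fin n → ℝ) → (Fin n → ℝ) → ℝ)
    (hKc : Continuous fun q : (Fin n → ℝ) × (Fin n → ℝ) => K q.1 q.2)
    (hKnn : ∀ x y, 0 ≤ K x y)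
    (c₀ ε₀ : ℝ) (hc₀ : 0 < c₀) (hε₀ : 0 < ε₀)
    (hKpos : ∀ x ∈ closure Ω, ∀ y ∈ Metric.ball x ε₀, c₀ ≤ K x y)
    (k : (Fin n → ℝ) → ℝ) (hk : ∀ x, k x = ∫ y in Ω, K y x)
    (a β : (Fin n → ℝ) → ℝ)
    (ha : ContinuousOn a (closure Ω)) (hβ : ContinuousOn β (closure Ω))
    (hβnn : ∀ x ∈ closure Ω, 0 ≤ β x)
    (p : ℝ) (hp : 1 < p)
    (hωne : {x ∈ closure Ω | β x = 0}.Nonempty)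
    (hωint : interior {x ∈ closure Ω | β x = 0} = ∅)
    (u : (Fin n → ℝ) → ℝ) (huc : ContinuousOn u (closure Ω))
    (hupos : ∀ x ∈ closure Ω, 0 < u x)
    (hub : ∃ M, ∀ x ∈ closure Ω, u x ≤ M)
    (heq : ∀ x ∈ closure Ω,
      (∫ y in Ω, K x y * u y) - k x * u x + a x * u x - β x * u x ^ p = 0) :
    ∃ δ > 0, ∀ x ∈ {x ∈ closure Ω | β x = 0}, a x - k x ≤ -δ :=
  stmt_7_general Ω hΩo hΩb K hKc hKnn c₀ ε₀ hc₀ hε₀ hKpos k a β p u huc hupos heq
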